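/- (Extremal correlation of the Rayleigh mixture.) For every g > 0, ∫_0^∞ 2(1 − Φ(λ)) · (λ/g) e^{−λ²/(2g)} dλ = 1 − √( g/(g+1) ). Equivalently, the extremal correlation function of the Rayleigh-mixed Brown–Resnick model with variogram γ satisfies ρ(h) = 1 − √( γ(h)/(γ(h)+1) ) for all h with γ(h) > 0. -/

import Mathlib

open MeasureTheory Filter Real Set

/-- Standard normal density. -/
noncomputable def stdPdf (t : ℝ) : ℝ := (Real.sqrt (2 * Real.pi))⁻¹ * Real.exp (-(t ^ 2) / 2)

/-- Standard normal CDF. -/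
noncomputable def stdCdf (x : ℝ) : ℝ := ∫ t in Set.Iic x, stdPdf t

/-!
Integrate by parts against the Rayleigh density `(l / g) e^{-l² / (2g)} = (-e^{-l² / (2g)})'`.
The boundary term is `2 (1 - Φ 0) = 1`, and the remaining integral
`2 ∫₀^∞ φ(l) e^{-l² / (2g)} dl` is a centred Gaussian integral, equal to `√(g / (g + 1))`.
-/

section StandardNormal

lemma stdPdf_eq_gaussianPDFReal : stdPdf = ProbabilityTheory.gaussianPDFReal 0 1 := by
  ext t
  simp [stdPdf, ProbabilityTheory.gaussianPDFReal]

lemma continuous_stdPdf : Continuous stdPdf := by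
  unfold stdPdf
  fun_prop

lemma stdPdf_nonneg (t : ℝ) : 0 ≤ stdPdf t :=
  stdPdf_eq_gaussianPDFReal ▸ ProbabilityTheory.gaussianPDFReal_nonneg 0 1 t

lemma integrable_stdPdf : Integrable stdPdf :=
  stdPdf_eq_gaussianPDFReal ▸ ProbabilityTheory.integrable_gaussianPDFReal 0 1

lemma integral_stdPdf : ∫ t, stdPdf t = 1 :=
  stdPdf_eq_gaussianPDFReal ▸ ProbabilityTheory.integral_gaussianPDFReal_eq_one 0 one_ne_zero

lemma stdPdf_neg (t : ℝ) : stdPdf (-t) = stdPdf t := by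
  simp [stdPdf]

lemma hasDerivAt_stdCdf (x : ℝ) : HasDerivAt stdCdf (stdPdf x) x := by
  have hsplit : stdCdf = fun u => stdCdf 0 + ∫ t in (0 : ℝ)..u, stdPdf t := by
    funext u
    rw [← intervalIntegral.integral_Iic_sub_Iic integrable_stdPdf.integrableOn
      integrable_stdPdf.integrableOn, stdCdf, stdCdf]
    ring
  rw [hsplit]
  exact (continuous_stdPdf.integral_hasStrictDerivAt 0 x).hasDerivAt.const_add _

lemma continuous_stdCdf : Continuous stdCdf :=
  continuous_iff_continuousAt.2 fun x => (hasDerivAt_stdCdf x).continuousAt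

lemma stdCdf_nonneg (x : ℝ) : 0 ≤ stdCdf x :=
  integral_nonneg stdPdf_nonneg

lemma stdCdf_le_one (x : ℝ) : stdCdf x ≤ 1 :=
  integral_stdPdf ▸ setIntegral_le_integral integrable_stdPdf (.of_forall stdPdf_nonneg)

lemma norm_one_sub_stdCdf_le (x : ℝ) : ‖1 - stdCdf x‖ ≤ 1 := by
  rw [norm_eq_abs, abs_le]
  constructor <;> linarith [stdCdf_nonneg x, stdCdf_le_one x]

lemma stdCdf_zero : stdCdf 0 = 1 / 2 := by
  have hsymm : ∫ t in Ioi (0 : ℝ), stdPdf t = stdCdf 0 := by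
    rw [stdCdf]
    simpa [stdPdf_neg] using (integral_comp_neg_Iic (0 : ℝ) stdPdf).symm
  have hsplit := intervalIntegral.integral_Iic_add_Ioi (b := (0 : ℝ))
    integrable_stdPdf.integrableOn integrable_stdPdf.integrableOn
  rw [integral_stdPdf, hsymm] at hsplit
  change stdCdf 0 + stdCdf 0 = 1 at hsplit
  linarith

end StandardNormal

section Rayleigh

lemma hasDerivAt_neg_exp_neg_sq_div (g l : ℝ) :
    HasDerivAt (fun l => -exp (-(l ^ 2) / (2 * g))) (l / g * exp (-(l ^ 2) / (2 * g))) l := by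
  have hinner : HasDerivAt (fun l : ℝ => -(l ^ 2) / (2 * g)) (-(2 * l) / (2 * g)) l := by
    simpa using ((hasDerivAt_pow 2 l).neg).div_const (2 * g)
  refine hinner.exp.neg.congr_deriv ?_
  rcases eq_or_ne g 0 with rfl | hg
  · simp
  · field_simp

variable {g : ℝ}

lemma norm_exp_neg_sq_div_le_one (hg : 0 ≤ g) (l : ℝ) :
    ‖exp (-(l ^ 2) / (2 * g))‖ ≤ 1 := by
  rw [norm_of_nonneg (exp_nonneg _), exp_le_one_iff]
  exact div_nonpos_of_nonpos_of_nonneg (neg_nonpos.2 (sq_nonneg l)) (by positivity)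

lemma tendsto_exp_neg_sq_div_atTop (hg : 0 < g) :
    Tendsto (fun l : ℝ => exp (-(l ^ 2) / (2 * g))) atTop (nhds 0) :=
  tendsto_exp_atBot.comp <|
    (tendsto_neg_atBot_iff.2 (tendsto_pow_atTop two_ne_zero)).atBot_div_const (by positivity)

lemma integrableOn_mul_exp_neg_sq_div (hg : 0 < g) :
    IntegrableOn (fun l => l / g * exp (-(l ^ 2) / (2 * g))) (Ioi 0) := by
  have h := ((integrable_mul_exp_neg_mul_sq (by positivity : (0 : ℝ) < 1 / (2 * g))).div_const g)
  refine (h.congr (.of_forall fun l => ?_)).integrableOn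
  simp only [div_mul_eq_mul_div, one_div, neg_mul, inv_mul_eq_div, neg_div]

lemma integral_Ioi_stdPdf_mul_exp_neg_sq_div (hg : 0 < g) :
    ∫ l in Ioi (0 : ℝ), stdPdf l * exp (-(l ^ 2) / (2 * g)) = √(g / (g + 1)) / 2 := by
  have hpdf (l : ℝ) : stdPdf l * exp (-(l ^ 2) / (2 * g)) =
      (√(2 * π))⁻¹ * exp (-((g + 1) / (2 * g)) * l ^ 2) := by
    rw [stdPdf, mul_assoc, ← exp_add]
    congr 2
    field_simp
    ring
  calc ∫ l in Ioi (0 : ℝ), stdPdf l * exp (-(l ^ 2) / (2 * g))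
      = (√(2 * π))⁻¹ * (√(π / ((g + 1) / (2 * g))) / 2) := by
        simp_rw [hpdf, integral_const_mul, integral_gaussian_Ioi]
    _ = √((2 * π)⁻¹ * (π / ((g + 1) / (2 * g)))) / 2 := by
        rw [sqrt_mul (inv_nonneg.2 (by positivity)), sqrt_inv]
        ring
    _ = √(g / (g + 1)) / 2 := by
        congr 2
        field_simp

end Rayleigh

/-- **Extremal correlation of the Rayleigh mixture.** -/
theorem stmt18 (g : ℝ) (hg : 0 < g) :
    ∫ l in Set.Ioi (0 : ℝ),
        2 * (1 - stdCdf l) * (l / g * Real.exp (-(l ^ 2) / (2 * g)))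
      = 1 - Real.sqrt (g / (g + 1)) := by
  set u : ℝ → ℝ := fun l => 2 * (1 - stdCdf l)
  set v : ℝ → ℝ := fun l => -exp (-(l ^ 2) / (2 * g))
  have hu (l : ℝ) : HasDerivAt u (-(2 * stdPdf l)) l := by
    simpa using ((hasDerivAt_stdCdf l).const_sub 1).const_mul 2
  have hu_le (l : ℝ) : ‖u l‖ ≤ 2 := by
    simpa [u, norm_mul] using mul_le_mul_of_nonneg_left (norm_one_sub_stdCdf_le l) zero_le_two
  have hv_le (l : ℝ) : ‖v l‖ ≤ 1 := by
    simpa [v] using norm_exp_neg_sq_div_le_one hg.le l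
  have hu_cont : Continuous u := by
    have := continuous_stdCdf
    fun_prop
  have huv_zero : (u * v) 0 = -1 := by
    norm_num [u, v, stdCdf_zero]
  have hparts := integral_Ioi_mul_deriv_eq_deriv_mul (a := 0) (a' := -1) (b' := 0)
    (fun l _ => hu l) (fun l _ => hasDerivAt_neg_exp_neg_sq_div g l)
    ((integrableOn_mul_exp_neg_sq_div hg).bdd_mul hu_cont.aestronglyMeasurable (.of_forall hu_le))
    ((integrable_stdPdf.integrableOn.const_mul 2).neg.mul_bdd (by fun_prop) (.of_forall hv_le))
    (huv_zero ▸ (hu_cont.mul (by fun_prop)).continuousWithinAt.tendsto)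
    (isBoundedUnder_le_mul_tendsto_zero ⟨2, eventually_map.2 (.of_forall hu_le)⟩
      (by simpa using (tendsto_exp_neg_sq_div_atTop hg).neg))
  rw [hparts]
  simp_rw [neg_mul_neg, mul_assoc]
  rw [integral_const_mul, integral_Ioi_stdPdf_mul_exp_neg_sq_div hg]
  ring
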